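/- Finite 'Dirac' valuations: for a nonempty finite subset F of a topological space X, the map δ(F) : Opens(X) → \mathbb{A} defined by δ(F)(U) = ⊤ if F ⊆ U, δ(F)(U) = ⊥ if F ∩ U = ∅, and δ(F)(U) = m otherwise, is a Heckmann \mathbb{A}-valuation: it maps ∅ to ⊥, X to ⊤, and satisfies (H1) and (H2). Moreover δ(F) = ⊻_{x ∈ F} δ({x}) where ⊻ on functions is pointwise with the \mathbb{A}-semilattice operation. -/
import Mathlib


inductive Chain3 | bot | mid | top
deriving DecidableEq

def Chain3.op (a b : Chain3) : Chain3 := if a = b then a else Chain3.mid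

open TopologicalSpace Classical in
/-- δ(F)(U) = ⊤ if F ⊆ U, ⊥ if F ∩ U = ∅, and m otherwise. -/
noncomputable def dirac {X : Type*} [TopologicalSpace X] (F : Finset X) (U : Opens X) : Chain3 :=
  if ∀ x ∈ F, x ∈ U then Chain3.top
  else if ∀ x ∈ F, x ∉ U then Chain3.bot
  else Chain3.mid

namespace DiracAux

open TopologicalSpace

variable {X : Type*} [TopologicalSpace X]

lemma mem_sup {U V : Opens X} {x : X} : x ∈ U ⊔ V ↔ x ∈ U ∨ x ∈ V := by
  simp [← SetLike.mem_coe, Opens.coe_sup]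

lemma mem_inf {U V : Opens X} {x : X} : x ∈ U ⊓ V ↔ x ∈ U ∧ x ∈ V := by
  simp [← SetLike.mem_coe, Opens.coe_inf]

lemma dirac_top {F : Finset X} {U : Opens X} (h : ∀ y ∈ F, y ∈ U) :
    dirac F U = Chain3.top := by
  simp only [dirac]; rw [if_pos h]

lemma dirac_bot {F : Finset X} (hF : F.Nonempty) {U : Opens X} (h : ∀ y ∈ F, y ∉ U) :
    dirac F U = Chain3.bot := by
  obtain ⟨x₀, hx₀⟩ := hF
  simp only [dirac]
  rw [if_neg (fun h' => h x₀ hx₀ (h' x₀ hx₀)), if_pos h]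

lemma dirac_mid {F : Finset X} {U : Opens X} (h1 : ¬ ∀ y ∈ F, y ∈ U)
    (h2 : ¬ ∀ y ∈ F, y ∉ U) : dirac F U = Chain3.mid := by
  simp only [dirac]; rw [if_neg h1, if_neg h2]

lemma dirac_eq_top {F : Finset X} {U : Opens X} (h : dirac F U = Chain3.top) :
    ∀ y ∈ F, y ∈ U := by
  by_contra hc
  simp only [dirac] at h
  rw [if_neg hc] at h
  split at h <;> exact Chain3.noConfusion h

lemma dirac_eq_bot {F : Finset X} {U : Opens X} (h : dirac F U = Chain3.bot) :
    ∀ y ∈ F, y ∉ U := by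
  by_contra hc
  simp only [dirac, if_neg hc] at h
  split at h <;> exact Chain3.noConfusion h

end DiracAux

open TopologicalSpace in
theorem dirac_is_heckmann_valuation {X : Type*} [TopologicalSpace X] [DecidableEq X]
    (F : Finset X) (hF : F.Nonempty) :
    dirac F (⊥ : Opens X) = Chain3.bot ∧
    dirac F (⊤ : Opens X) = Chain3.top ∧
    (∀ U V : Opens X, dirac F U = Chain3.bot → dirac F (U ⊔ V) = dirac F V) ∧
    (∀ U V : Opens X, dirac F U = Chain3.top → dirac F (U ⊓ V) = dirac F V) ∧
    (∀ (x : X) (U : Opens X), (x ∈ U → dirac {x} U = Chain3.top) ∧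
      (x ∉ U → dirac {x} U = Chain3.bot)) ∧
    (∀ (x : X) (G : Finset X), G.Nonempty → ∀ U : Opens X,
      dirac (insert x G) U = (dirac {x} U).op (dirac G U)) := by
  open DiracAux in
  refine ⟨?_, ?_, ?_, ?_, ?_, ?_⟩
  · exact dirac_bot hF (fun y _ hy => hy)
  · exact dirac_top (fun y _ => trivial)
  · intro U V h
    have hb := dirac_eq_bot h
    by_cases h1 : ∀ y ∈ F, y ∈ V
    · rw [dirac_top h1, dirac_top (fun y hy => mem_sup.2 (Or.inr (h1 y hy)))]
    · by_cases h2 : ∀ y ∈ F, y ∉ V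
      · rw [dirac_bot hF h2, dirac_bot hF (fun y hy hm =>
          (mem_sup.1 hm).elim (hb y hy) (h2 y hy))]
      · rw [dirac_mid h1 h2, dirac_mid
          (fun h' => h1 (fun y hy => (mem_sup.1 (h' y hy)).elim
            (fun hu => absurd hu (hb y hy)) id))
          (fun h' => h2 (fun y hy hv => h' y hy (mem_sup.2 (Or.inr hv))))]
  · intro U V h
    have ht := dirac_eq_top h
    by_cases h1 : ∀ y ∈ F, y ∈ V
    · rw [dirac_top h1, dirac_top (fun y hy => mem_inf.2 ⟨ht y hy, h1 y hy⟩)]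
    · by_cases h2 : ∀ y ∈ F, y ∉ V
      · rw [dirac_bot hF h2, dirac_bot hF (fun y hy hm => h2 y hy (mem_inf.1 hm).2)]
      · rw [dirac_mid h1 h2, dirac_mid
          (fun h' => h1 (fun y hy => (mem_inf.1 (h' y hy)).2))
          (fun h' => h2 (fun y hy hv => h' y hy (mem_inf.2 ⟨ht y hy, hv⟩)))]
  · intro x U
    refine ⟨fun hx => dirac_top ?_, fun hx => dirac_bot ⟨x, Finset.mem_singleton_self x⟩ ?_⟩ <;>
      · intro y hy
        rw [Finset.mem_singleton] at hy
        subst hy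
        exact hx
  · intro x G hG U
    have hxs : ({x} : Finset X).Nonempty := ⟨x, Finset.mem_singleton_self x⟩
    have hins : (insert x G).Nonempty := ⟨x, Finset.mem_insert_self x G⟩
    have hmemx : ∀ P : X → Prop, (∀ y ∈ ({x} : Finset X), P y) ↔ P x := by
      intro P
      simp
    have hmemins : ∀ P : X → Prop, (∀ y ∈ insert x G, P y) ↔ P x ∧ ∀ y ∈ G, P y :=
      fun P => Finset.forall_mem_insert x G P
    obtain ⟨y₀, hy₀⟩ := hG
    by_cases hx : x ∈ U
    · rw [dirac_top ((hmemx _).2 hx)]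
      by_cases hall : ∀ y ∈ G, y ∈ U
      · rw [dirac_top hall, dirac_top ((hmemins _).2 ⟨hx, hall⟩)]; rfl
      · have hnb : ¬ ∀ y ∈ insert x G, y ∈ U := fun h' => hall ((hmemins _).1 h').2
        have hnb2 : ¬ ∀ y ∈ insert x G, y ∉ U := fun h' => ((hmemins _).1 h').1 hx
        rw [dirac_mid hnb hnb2]
        by_cases hn : ∀ y ∈ G, y ∉ U
        · rw [dirac_bot ⟨y₀, hy₀⟩ hn]; rfl
        · rw [dirac_mid hall hn]; rfl
    · rw [dirac_bot hxs ((hmemx _).2 hx)]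
      by_cases hn : ∀ y ∈ G, y ∉ U
      · rw [dirac_bot ⟨y₀, hy₀⟩ hn, dirac_bot hins ((hmemins _).2 ⟨hx, hn⟩)]; rfl
      · push_neg at hn
        obtain ⟨y, hy, hyU⟩ := hn
        have h1 : ¬ ∀ z ∈ insert x G, z ∈ U := fun h' => hx ((hmemins _).1 h').1
        have h2 : ¬ ∀ z ∈ insert x G, z ∉ U := fun h' => ((hmemins _).1 h').2 y hy hyU
        rw [dirac_mid h1 h2]
        by_cases hall : ∀ z ∈ G, z ∈ U
        · rw [dirac_top hall]; rfl
        · rw [dirac_mid hall (fun h' => h' y hy hyU)]; rfl
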